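/- Let 1/3 ≤ α < 1, set δ = g₁(α) and γ = α(1+δ)/(δ(1−α)). Then γ and δ are positive, γ(1−α) − α > 0, and they satisfy the system of equations δ = 1/α + ((α−1)/α)·(δ/γ) and δ = α/(γ(1−α) − α). -/

import Mathlib

/-!
`g₁(α)` is the positive root of `(2α² − 2α + 1) δ² = α(1 − α) δ + α`. The choice of `γ` makes
`γ(1 − α) − α = α / δ`, which is the second equation verbatim, and turns the first equation
into that same quadratic relation for `δ`.
-/

noncomputable def g1 (α : ℝ) : ℝ :=
  (α * (1 - α) + Real.sqrt (α ^ 2 * (1 - α) ^ 2 + 4 * α * (2 * α ^ 2 - 2 * α + 1))) /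
    (2 * (2 * α ^ 2 - 2 * α + 1))

lemma two_mul_sq_sub_two_mul_add_one_pos (α : ℝ) : 0 < 2 * α ^ 2 - 2 * α + 1 := by
  nlinarith [sq_nonneg (2 * α - 1)]

lemma g1_pos {α : ℝ} (hα : 0 < α) : 0 < g1 α := by
  have hq := two_mul_sq_sub_two_mul_add_one_pos α
  unfold g1
  apply div_pos _ (by linarith)
  have habs : |α * (1 - α)| < √(α ^ 2 * (1 - α) ^ 2 + 4 * α * (2 * α ^ 2 - 2 * α + 1)) := by
    rw [← Real.sqrt_sq_eq_abs]
    exact Real.sqrt_lt_sqrt (sq_nonneg _) (by nlinarith)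
  linarith [neg_abs_le (α * (1 - α))]

lemma g1_quadratic {α : ℝ} (hα : 0 ≤ α) :
    (2 * α ^ 2 - 2 * α + 1) * g1 α ^ 2 = α * (1 - α) * g1 α + α := by
  have hq := two_mul_sq_sub_two_mul_add_one_pos α
  have hdiscrim : discrim (2 * α ^ 2 - 2 * α + 1) (-(α * (1 - α))) (-α) =
      √(α ^ 2 * (1 - α) ^ 2 + 4 * α * (2 * α ^ 2 - 2 * α + 1)) *
        √(α ^ 2 * (1 - α) ^ 2 + 4 * α * (2 * α ^ 2 - 2 * α + 1)) := by
    rw [Real.mul_self_sqrt (by positivity), discrim]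
    ring
  have hroot := (quadratic_eq_zero_iff hq.ne' hdiscrim (g1 α)).2 (Or.inl (by rw [g1, neg_neg]))
  linear_combination hroot

lemma mul_one_sub_sub_eq_div {α δ : ℝ} (hδ : δ ≠ 0) (hα : α ≠ 1) :
    α * (1 + δ) / (δ * (1 - α)) * (1 - α) - α = α / δ := by
  have : 1 - α ≠ 0 := sub_ne_zero.2 hα.symm
  field_simp
  ring

/-- For `1/3 ≤ α < 1`, setting `δ = g₁(α)` and `γ = α(1+δ)/(δ(1−α))`, one has `γ, δ > 0`,
`γ(1−α) − α > 0`, and `δ = 1/α + ((α−1)/α)·(δ/γ) = α/(γ(1−α) − α)`. -/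
theorem g1_system (α δ γ : ℝ) (h1 : 1 / 3 ≤ α) (h2 : α < 1)
    (hδ : δ = g1 α) (hγ : γ = α * (1 + δ) / (δ * (1 - α))) :
    0 < γ ∧ 0 < δ ∧ 0 < γ * (1 - α) - α ∧
      δ = 1 / α + ((α - 1) / α) * (δ / γ) ∧
      δ = α / (γ * (1 - α) - α) := by
  have hα : 0 < α := by linarith
  have h1α : 0 < 1 - α := by linarith
  have hδpos : 0 < δ := hδ ▸ g1_pos hα
  have hquad := hδ ▸ g1_quadratic hα.le
  have hγsub : γ * (1 - α) - α = α / δ := hγ ▸ mul_one_sub_sub_eq_div hδpos.ne' h2.ne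
  refine ⟨hγ ▸ by positivity, hδpos, hγsub ▸ by positivity, ?_, ?_⟩
  · rw [hγ]
    field_simp
    linear_combination hquad
  · rw [hγsub, div_div_cancel₀ hα.ne']
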